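/- arXiv:2004.13399 — 7 statements merged into one kernel-verified Lean document; each statement's English description precedes it below -/
import Mathlib

section
/- For integers $a \ge b \ge j \ge 0$, we have $\sum_{i=j}^{b} C^{a-i}_{b-i} \cdot C^{i}_{i-j} = C^{a+1}_{b-j}$. -/
/-- Ballot numbers `C^n_k = C(n+k, n) - C(n+k, n+1)`. -/
def ballot (n k : ℕ) : ℕ := (n + k).choose n - (n + k).choose (n + 1)

lemma ballot_zero (n : ℕ) : ballot n 0 = 1 := by
  simp [ballot, Nat.choose_succ_self]

lemma ballot_self_succ (n : ℕ) : ballot n (n + 1) = 0 := by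
  have h : n + (n + 1) = 2 * n + 1 := by ring
  rw [ballot, h, Nat.choose_symm_half, Nat.sub_self]

lemma choose_succ_le {N r : ℕ} (h : 2 * r + 1 ≤ N) : N.choose r ≤ N.choose (r + 1) := by
  rcases eq_or_lt_of_le h with he | hl
  · obtain ⟨m, rfl⟩ : ∃ m, N = 2 * m + 1 := ⟨r, he.symm⟩
    have : r = m := by omega
    subst this
    rw [Nat.choose_symm_half]
  · exact Nat.choose_le_succ_of_lt_half_left (by omega)

lemma ballot_pascal (m k : ℕ) (h : k ≤ m) :
    ballot (m + 1) (k + 1) = ballot (m + 1) k + ballot m (k + 1) := by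
  set N := m + k + 1 with hN
  have hAB : N.choose (m + 1) ≤ N.choose m := by
    have h1 : N.choose (m + 1) = N.choose k := by
      rw [← Nat.choose_symm (by omega : m + 1 ≤ N)]
      congr 1; omega
    have h2 : N.choose m = N.choose (k + 1) := by
      rw [← Nat.choose_symm (by omega : m ≤ N)]
      congr 1; omega
    rw [h1, h2]
    exact choose_succ_le (by omega)
  have hBC : N.choose (m + 2) ≤ N.choose (m + 1) := by
    rcases Nat.eq_zero_or_pos k with rfl | hk
    · have : N < m + 2 := by omega
      simp [Nat.choose_eq_zero_of_lt this]
    · have h1 : N.choose (m + 2) = N.choose (k - 1) := by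
        rw [← Nat.choose_symm (by omega : m + 2 ≤ N)]
        congr 1; omega
      have h2 : N.choose (m + 1) = N.choose k := by
        rw [← Nat.choose_symm (by omega : m + 1 ≤ N)]
        congr 1; omega
      rw [h1, h2]
      have := choose_succ_le (N := N) (r := k - 1) (by omega)
      have hk1 : k - 1 + 1 = k := by omega
      rwa [hk1] at this
  have e1 : (m + 1) + (k + 1) = N + 1 := by omega
  have e2 : (m + 1) + k = N := by omega
  have e3 : m + (k + 1) = N := by omega
  rw [ballot, ballot, ballot, e1, e2, e3]
  rw [Nat.choose_succ_succ (N) (m), Nat.choose_succ_succ (N) (m + 1)]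
  simp only [Nat.succ_eq_add_one, show m + 1 + 1 = m + 2 from rfl] at *
  omega

theorem ballot_conv_aux (n : ℕ) : ∀ a b j : ℕ, a + b ≤ n → j ≤ b → b ≤ a →
    ∑ i ∈ Finset.Icc j b, ballot (a - i) (b - i) * ballot i (i - j)
      = ballot (a + 1) (b - j) := by
  induction n with
  | zero =>
    intro a b j h hjb hba
    have : a = 0 := by omega
    have : b = 0 := by omega
    have : j = 0 := by omega
    subst ‹a = 0›; subst ‹b = 0›; subst ‹j = 0›
    simp [ballot_zero]
  | succ n ih =>
    intro a b j h hjb hba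
    rcases eq_or_lt_of_le hjb with rfl | hjb'
    · -- base case b = j
      rw [Finset.Icc_self, Finset.sum_singleton]
      simp [ballot_zero]
    · -- j < b, write b = c + 1
      obtain ⟨c, rfl⟩ : ∃ c, b = c + 1 := ⟨b - 1, by omega⟩
      have hjc : j ≤ c := by omega
      have hca : c + 1 ≤ a := hba
      rw [← Finset.insert_Icc_right_eq_Icc_add_one (by omega : j ≤ c + 1),
        Finset.sum_insert (by simp)]
      have hstep : ∀ i ∈ Finset.Icc j c,
          ballot (a - i) (c + 1 - i) * ballot i (i - j)
            = ballot (a - i) (c - i) * ballot i (i - j)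
              + ballot (a - 1 - i) (c + 1 - i) * ballot i (i - j) := by
        intro i hi
        rw [Finset.mem_Icc] at hi
        have e1 : a - i = (a - 1 - i) + 1 := by omega
        have e2 : c + 1 - i = (c - i) + 1 := by omega
        rw [e1, e2, ballot_pascal (a - 1 - i) (c - i) (by omega), add_mul]
      rw [Finset.sum_congr rfl hstep, Finset.sum_add_distrib]
      have hIH1 : ∑ i ∈ Finset.Icc j c, ballot (a - i) (c - i) * ballot i (i - j)
          = ballot (a + 1) (c - j) := ih a c j (by omega) hjc (by omega)
      have hbracket :
          ballot (a - (c + 1)) (c + 1 - (c + 1)) * ballot (c + 1) (c + 1 - j)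
            + ∑ i ∈ Finset.Icc j c, ballot (a - 1 - i) (c + 1 - i) * ballot i (i - j)
          = ballot a (c + 1 - j) := by
        rcases eq_or_lt_of_le hca with rfl | hca'
        · -- a = c + 1
          have hz : ∀ i ∈ Finset.Icc j c,
              ballot (c + 1 - 1 - i) (c + 1 - i) * ballot i (i - j) = 0 := by
            intro i hi
            rw [Finset.mem_Icc] at hi
            have e2 : c + 1 - i = (c - i) + 1 := by omega
            have e1 : c + 1 - 1 - i = c - i := by omega
            rw [e1, e2, ballot_self_succ, zero_mul]
          rw [Finset.sum_eq_zero hz, add_zero, Nat.sub_self, ballot_zero, one_mul]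
        · -- c + 1 < a
          have hIH2 : ∑ i ∈ Finset.Icc j (c + 1),
              ballot (a - 1 - i) (c + 1 - i) * ballot i (i - j)
              = ballot (a - 1 + 1) (c + 1 - j) :=
            ih (a - 1) (c + 1) j (by omega) (by omega) (by omega)
          rw [← Finset.insert_Icc_right_eq_Icc_add_one (by omega : j ≤ c + 1),
            Finset.sum_insert (by simp)] at hIH2
          have e : a - 1 + 1 = a := by omega
          rw [e, Nat.sub_self, ballot_zero, one_mul] at hIH2
          rw [Nat.sub_self, ballot_zero, one_mul]
          exact hIH2
      have e : c + 1 - j = (c - j) + 1 := by omega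
      have hp := ballot_pascal a (c - j) (by omega)
      rw [e] at hbracket ⊢
      rw [hp, Finset.sum_congr rfl (fun i hi => rfl)] at *
      omega

/-- For `a ≥ b ≥ j ≥ 0`, `∑_{i=j}^b C^{a-i}_{b-i} · C^i_{i-j} = C^{a+1}_{b-j}`. -/
theorem ballot_conv (a b j : ℕ) (hjb : j ≤ b) (hba : b ≤ a) :
    ∑ i ∈ Finset.Icc j b, ballot (a - i) (b - i) * ballot i (i - j)
      = ballot (a + 1) (b - j) := by
  exact ballot_conv_aux (a + b) a b j le_rfl hjb hba
end

section
/- For $n \ge n_0 \ge 0$, $\sum_{k=0}^{n-n_0} (k+1)\, C^{n+n_0-1}_{n-n_0-k} = C^{n+n_0+1}_{n-n_0}$. Equivalently, the partition function of the semipermeable exclusion process at $\alpha=\beta=1$ equals the ballot number $C^{n+n_0+1}_{n-n_0}$. -/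
lemma choose_desc (n k : ℕ) (h : k ≤ n + 1) :
    (n + k).choose (n + 1) ≤ (n + k).choose n := by
  rcases Nat.eq_or_lt_of_le h with rfl | h'
  · -- k = n+1
    have hs : (n + (n + 1)).choose ((n + (n + 1)) - (n + 1)) = (n + (n + 1)).choose (n + 1) :=
      Nat.choose_symm (by omega)
    have : (n + (n + 1)) - (n + 1) = n := by omega
    rw [this] at hs
    omega
  · rcases Nat.eq_zero_or_pos k with rfl | hk
    · simp [Nat.choose_succ_self]
    · have hk1 : (n + k).choose ((n + k) - (n + 1)) = (n + k).choose (n + 1) :=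
        Nat.choose_symm (by omega)
      have hk2 : (n + k).choose ((n + k) - n) = (n + k).choose n :=
        Nat.choose_symm (by omega)
      have e1 : (n + k) - (n + 1) = k - 1 := by omega
      have e2 : (n + k) - n = k := by omega
      rw [e1] at hk1
      rw [e2] at hk2
      rw [← hk1, ← hk2]
      have : k - 1 < (n + k) / 2 := by omega
      have := Nat.choose_le_succ_of_lt_half_left this
      have ek : k - 1 + 1 = k := by omega
      rwa [ek] at this

lemma ballot_rec (n k : ℕ) (h : k + 1 ≤ n + 1) :
    ballot (n + 1) (k + 1) = ballot (n + 1) k + ballot n (k + 1) := by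
  unfold ballot
  have p1 : (n + 1 + (k + 1)).choose (n + 1) =
      (n + k + 1).choose n + (n + k + 1).choose (n + 1) := by
    have := Nat.succ_sub_one (n + 1)
    have h2 : n + 1 + (k + 1) = (n + k + 1) + 1 := by ring
    rw [h2, Nat.choose_succ_succ' (n + k + 1) n]
  have p2 : (n + 1 + (k + 1)).choose (n + 2) =
      (n + k + 1).choose (n + 1) + (n + k + 1).choose (n + 2) := by
    have h2 : n + 1 + (k + 1) = (n + k + 1) + 1 := by ring
    rw [h2, Nat.choose_succ_succ' (n + k + 1) (n + 1)]
  have e1 : n + 1 + k = n + k + 1 := by ring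
  have e2 : n + (k + 1) = n + k + 1 := by ring
  have hab : (n + k + 1).choose (n + 1) ≤ (n + k + 1).choose n := by
    have := choose_desc n (k + 1) h
    rwa [e2] at this
  have hbc : (n + k + 1).choose (n + 2) ≤ (n + k + 1).choose (n + 1) := by
    have := choose_desc (n + 1) k (by omega)
    rwa [e1] at this
  have e3 : n + 1 + 1 = n + 2 := rfl
  rw [e1, e2, e3, p1, p2]
  omega

lemma ballot_sum (n j : ℕ) (h : j ≤ n + 1) :
    ∑ i ∈ Finset.range (j + 1), ballot n i = ballot (n + 1) j := by
  induction j with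
  | zero => simp [ballot_zero]
  | succ j ih =>
    rw [Finset.sum_range_succ, ih (by omega), ballot_rec n j (by omega)]

lemma ballot_sum2 (n j : ℕ) (h : j ≤ n + 1) :
    ∑ k ∈ Finset.range (j + 1), (k + 1) * ballot n (j - k) = ballot (n + 2) j := by
  induction j with
  | zero => simp [ballot_zero]
  | succ j ih =>
    rw [Finset.sum_range_succ' _ (j + 1)]
    have step : ∀ k ∈ Finset.range (j + 1),
        (k + 1 + 1) * ballot n (j + 1 - (k + 1)) =
        (k + 1) * ballot n (j - k) + ballot n (j - k) := by
      intro k hk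
      have : j + 1 - (k + 1) = j - k := by omega
      rw [this]; ring
    rw [Finset.sum_congr rfl step, Finset.sum_add_distrib, ih (by omega)]
    have hrefl : ∑ k ∈ Finset.range (j + 1), ballot n (j - k) =
        ∑ i ∈ Finset.range (j + 1), ballot n i := by
      rw [← Finset.sum_range_reflect (fun i => ballot n i) (j + 1)]
      apply Finset.sum_congr rfl
      intro k hk
      simp only [Finset.mem_range] at hk
      congr 1
    rw [hrefl, ballot_sum n j (by omega)]
    have hr := ballot_rec (n + 1) j (by omega)
    have e3 : n + 1 + 1 = n + 2 := rfl
    rw [e3] at hr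
    have hr2 := ballot_rec n j (by omega)
    simp only [Nat.sub_zero, zero_add, one_mul]
    omega

/-- For `n ≥ n₀ ≥ 0`, the partition function of the semipermeable exclusion
process at `α = β = 1`, namely `∑_{k=0}^{n-n₀} (k+1) C^{n+n₀-1}_{n-n₀-k}`,
equals the ballot number `C^{n+n₀+1}_{n-n₀}`. -/
theorem semiperm_pf_one_one (n n₀ : ℕ) (h : n₀ ≤ n) :
    ∑ k ∈ Finset.range (n - n₀ + 1), (k + 1) * ballot (n + n₀ - 1) (n - n₀ - k)
      = ballot (n + n₀ + 1) (n - n₀) := by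
  rcases Nat.eq_zero_or_pos (n + n₀) with h0 | hpos
  · have hn : n = 0 := by omega
    have hn0 : n₀ = 0 := by omega
    subst hn hn0
    simp [ballot_zero]
  · obtain ⟨m, hm⟩ : ∃ m, n + n₀ = m + 1 := ⟨n + n₀ - 1, by omega⟩
    have e1 : n + n₀ - 1 = m := by omega
    have e2 : n + n₀ + 1 = m + 2 := by omega
    rw [e1, e2]
    exact ballot_sum2 m (n - n₀) (by omega)
end

section
/- For $k \ge 0$, we have $\sum_{i=0}^{k} C^k_{k-i}\, 2^i = \binom{2k+1}{k}$, i.e., $M_k(1/2) = \binom{2k+1}{k}$. -/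
lemma choose_succ_le_of (m k : ℕ) (h : m ≤ 2 * k + 1) :
    m.choose (k + 1) ≤ m.choose k := by
  have h2 : m.choose (k + 1) * (k + 1) ≤ m.choose k * (k + 1) := by
    rw [Nat.choose_succ_right_eq]
    exact Nat.mul_le_mul_left _ (by omega)
  exact Nat.le_of_mul_le_mul_right h2 (Nat.succ_pos k)

/-- `M_k(1/2) = ∑_{i=0}^k C^k_{k-i} 2^i = C(2k+1, k)`. -/
theorem Mk_half (k : ℕ) :
    ∑ i ∈ Finset.range (k + 1), ballot k (k - i) * 2 ^ i = (2 * k + 1).choose k := by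
  have key : ∀ i ∈ Finset.range (k + 1),
      ((ballot k (k - i) * 2 ^ i : ℕ) : ℤ) =
        (fun j => 2 ^ j * (((2 * k + 1 - j).choose (k + 1) : ℕ) : ℤ)) i -
        (fun j => 2 ^ j * (((2 * k + 1 - j).choose (k + 1) : ℕ) : ℤ)) (i + 1) := by
    intro i hi
    simp only [Finset.mem_range] at hi
    have hik : i ≤ k := by omega
    have hm : k + (k - i) = 2 * k - i := by omega
    have hle : (2 * k - i).choose (k + 1) ≤ (2 * k - i).choose k :=
      choose_succ_le_of _ _ (by omega)
    have h1 : 2 * k + 1 - i = (2 * k - i) + 1 := by omega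
    have h2 : 2 * k + 1 - (i + 1) = 2 * k - i := by omega
    simp only [ballot, hm, h1, h2, Nat.choose_succ_succ]
    push_cast [Nat.cast_sub hle]
    ring
  have hsum := Finset.sum_congr rfl key
  rw [Finset.sum_range_sub'] at hsum
  have hf0 : 2 * k + 1 - 0 = 2 * k + 1 := by omega
  have hfk : 2 * k + 1 - (k + 1) = k := by omega
  simp only [hf0, hfk, pow_zero, one_mul, Nat.choose_succ_self, Nat.cast_zero,
    mul_zero, sub_zero] at hsum
  have hsymm : (2 * k + 1).choose (k + 1) = (2 * k + 1).choose k := by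
    have h := Nat.choose_symm (by omega : k ≤ 2 * k + 1)
    have he : 2 * k + 1 - k = k + 1 := by omega
    rw [he] at h
    exact h
  rw [hsymm] at hsum
  exact_mod_cast hsum
end

section
/- For $n \ge n_0 \ge 0$, the partition function of the $B$-TASEP with $n$ sites and $n_0$ zeros equals $\binom{2n}{n-n_0}$. Equivalently, $C^{n+n_0-1}_{n-n_0} + 2\sum_{i=n_0}^{n-1} C^{i+n_0-1}_{i-n_0}\binom{2n-2i-1}{n-i-1} = \binom{2n}{n-n_0}$. -/
namespace BTasepAux

/-- `g M K = ∑_{j > K} C(M, j)`. -/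
def g (M K : ℕ) : ℕ :=
  if M ≤ K then 0 else M.choose (K + 1) + g M (K + 1)
termination_by M - K
decreasing_by omega

lemma g_top (M K : ℕ) (h : M ≤ K) : g M K = 0 := by rw [g]; simp [h]

lemma g_step (M K : ℕ) : g M K = M.choose (K + 1) + g M (K + 1) := by
  rw [g]
  split_ifs with h
  · rw [g_top M (K + 1) (by omega), Nat.choose_eq_zero_of_lt (by omega)]
  · rfl

lemma g_succ (M K : ℕ) : g (M + 1) K = 2 * g M K + M.choose K := by
  suffices H : ∀ d K, M + 1 - K ≤ d → g (M + 1) K = 2 * g M K + M.choose K from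
    H _ K le_rfl
  intro d
  induction d with
  | zero =>
    intro K hK
    rw [g_top _ _ (by omega), g_top _ _ (by omega),
      Nat.choose_eq_zero_of_lt (by omega)]
  | succ d ih =>
    intro K hK
    rcases le_or_gt (M + 1) K with h | h
    · rw [g_top _ _ (by omega), g_top _ _ (by omega),
        Nat.choose_eq_zero_of_lt (by omega)]
    · rw [g_step (M + 1) K, ih (K + 1) (by omega), g_step M K,
        Nat.choose_succ_succ' M K]
      ring

/-- `C(2b+2, b+1) = 2 C(2b, b+1) + 2 C(2b, b)`. -/
lemma p0 (b : ℕ) :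
    (2 * b + 1 + 1).choose (b + 1)
      = 2 * ((2 * b).choose (b + 1)) + 2 * ((2 * b).choose b) := by
  have hsymm : (2 * b + 1).choose b = (2 * b + 1).choose (b + 1) := by
    have h := Nat.choose_symm (show b + 1 ≤ 2 * b + 1 by omega)
    rw [show 2 * b + 1 - (b + 1) = b from by omega] at h
    exact h
  rw [Nat.choose_succ_succ' (2 * b + 1) b, hsymm,
    Nat.choose_succ_succ' (2 * b) b]
  ring

/-- double Pascal. -/
lemma p1 (b s : ℕ) :
    (2 * b + 1 + 1).choose (b + s + 1 + 1)
      = (2 * b).choose (b + s + 2) + 2 * ((2 * b).choose (b + s + 1))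
          + (2 * b).choose (b + s) := by
  rw [Nat.choose_succ_succ' (2 * b + 1) (b + s + 1),
    Nat.choose_succ_succ' (2 * b) (b + s),
    Nat.choose_succ_succ' (2 * b) (b + s + 1)]
  ring

/-- `C(2K+2, K+1) = 2 C(2K+1, K)`. -/
lemma dbl (K : ℕ) : (2 * K + 1 + 1).choose (K + 1) = 2 * ((2 * K + 1).choose K) := by
  have hsymm : (2 * K + 1).choose (K + 1) = (2 * K + 1).choose K := by
    have h := Nat.choose_symm (show K + 1 ≤ 2 * K + 1 by omega)
    rw [show 2 * K + 1 - (K + 1) = K from by omega] at h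
    exact h.symm
  rw [Nat.choose_succ_succ' (2 * K + 1) K, hsymm]
  ring

/-- The key convolution identity. -/
lemma key (m : ℕ) : ∀ N r : ℕ,
    (∑ a ∈ Finset.range (N + 1),
        (2 * a + 1).choose (a + 1 + m) * (2 * (N - a)).choose (N - a + r))
      = g (2 * N + 2) (N + m + r + 1) := by
  intro N
  induction N with
  | zero =>
    intro r
    rw [Finset.sum_range_one]
    rcases Nat.eq_zero_or_pos (m + r) with h | h
    · have hm : m = 0 := by omega
      have hr : r = 0 := by omega
      subst hm; subst hr
      rw [g_step 2 1, g_top 2 2 le_rfl]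
      decide
    · rw [g_top _ _ (by omega)]
      rcases Nat.eq_zero_or_pos m with hm | hm
      · subst hm
        rw [show (2 * (0 - 0)) = 0 from rfl, show 0 - 0 + r = r from by omega,
          Nat.choose_eq_zero_of_lt (show (0:ℕ) < r by omega), mul_zero]
      · rw [Nat.choose_eq_zero_of_lt (show (1:ℕ) < 1 + m by omega)]
        simp
  | succ N ih =>
    intro r
    rw [Finset.sum_range_succ]
    have htop : N + 1 - (N + 1) = 0 := by omega
    rw [htop]
    rcases r with _ | s
    · -- r = 0
      have hterm : ∀ a ∈ Finset.range (N + 1),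
          (2 * a + 1).choose (a + 1 + m) * (2 * (N + 1 - a)).choose (N + 1 - a + 0)
            = 2 * ((2 * a + 1).choose (a + 1 + m) * (2 * (N - a)).choose (N - a + 1))
              + 2 * ((2 * a + 1).choose (a + 1 + m) * (2 * (N - a)).choose (N - a + 0)) := by
        intro a ha
        rw [Finset.mem_range] at ha
        rw [show N + 1 - a + 0 = N - a + 1 from by omega,
          show 2 * (N + 1 - a) = 2 * (N - a) + 1 + 1 from by omega,
          p0 (N - a), show N - a + 0 = N - a from rfl]
        ring
      rw [Finset.sum_congr rfl hterm, Finset.sum_add_distrib,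
        ← Finset.mul_sum, ← Finset.mul_sum, ih 1, ih 0]
      -- RHS bookkeeping
      have h1 : g (2 * (N + 1) + 2) (N + 1 + m + 0 + 1)
          = 2 * g (2 * N + 2 + 1) (N + m + 2) + (2 * N + 2 + 1).choose (N + m + 2) := by
        rw [show 2 * (N + 1) + 2 = (2 * N + 2 + 1) + 1 from by omega,
          show N + 1 + m + 0 + 1 = N + m + 2 from by omega]
        exact g_succ _ _
      have h2 : g (2 * N + 2 + 1) (N + m + 2)
          = 2 * g (2 * N + 2) (N + m + 2) + (2 * N + 2).choose (N + m + 2) := by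
        rw [show 2 * N + 2 + 1 = (2 * N + 2) + 1 from rfl]
        exact g_succ _ _
      have h3 : g (2 * N + 2) (N + m + 0 + 1)
          = (2 * N + 2).choose (N + m + 2) + g (2 * N + 2) (N + m + 2) := by
        rw [show N + m + 0 + 1 = N + m + 1 from by omega,
          show N + m + 2 = (N + m + 1) + 1 from by omega]
        exact g_step _ _
      have h4 : (2 * (N + 1) + 1).choose (N + 1 + 1 + m)
          = (2 * N + 2 + 1).choose (N + m + 2) := by
        rw [show 2 * (N + 1) + 1 = 2 * N + 2 + 1 from by omega,
          show N + 1 + 1 + m = N + m + 2 from by omega]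
      have h5 : g (2 * N + 2) (N + m + 1 + 1) = g (2 * N + 2) (N + m + 2) := by
        rw [show N + m + 1 + 1 = N + m + 2 from by omega]
      rw [h1, h2, h3, h4, h5]
      rw [Nat.choose_zero_right]
      ring
    · -- r = s+1
      have hterm : ∀ a ∈ Finset.range (N + 1),
          (2 * a + 1).choose (a + 1 + m) * (2 * (N + 1 - a)).choose (N + 1 - a + (s + 1))
            = (2 * a + 1).choose (a + 1 + m) * (2 * (N - a)).choose (N - a + (s + 2))
              + (2 * ((2 * a + 1).choose (a + 1 + m) * (2 * (N - a)).choose (N - a + (s + 1)))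
                + (2 * a + 1).choose (a + 1 + m) * (2 * (N - a)).choose (N - a + s)) := by
        intro a ha
        rw [Finset.mem_range] at ha
        rw [show N + 1 - a + (s + 1) = (N - a) + s + 1 + 1 from by omega,
          show 2 * (N + 1 - a) = 2 * (N - a) + 1 + 1 from by omega,
          p1 (N - a) s,
          show N - a + s + 2 = N - a + (s + 2) from by omega,
          show N - a + s + 1 = N - a + (s + 1) from by omega]
        ring
      rw [Finset.sum_congr rfl hterm, Finset.sum_add_distrib, Finset.sum_add_distrib,
        ← Finset.mul_sum, ih (s + 2), ih (s + 1), ih s]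
      rw [Nat.choose_eq_zero_of_lt (show (0:ℕ) < 0 + (s + 1) by omega), mul_zero, add_zero]
      -- RHS bookkeeping
      have h1 : g (2 * (N + 1) + 2) (N + 1 + m + (s + 1) + 1)
          = 2 * g (2 * N + 2 + 1) (N + m + s + 3) + (2 * N + 2 + 1).choose (N + m + s + 3) := by
        rw [show 2 * (N + 1) + 2 = (2 * N + 2 + 1) + 1 from by omega,
          show N + 1 + m + (s + 1) + 1 = N + m + s + 3 from by omega]
        exact g_succ _ _
      have h2 : g (2 * N + 2 + 1) (N + m + s + 3)
          = 2 * g (2 * N + 2) (N + m + s + 3) + (2 * N + 2).choose (N + m + s + 3) := by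
        exact g_succ _ _
      have h3 : g (2 * N + 2) (N + m + (s + 1) + 1)
          = (2 * N + 2).choose (N + m + s + 3) + g (2 * N + 2) (N + m + s + 3) := by
        rw [show N + m + (s + 1) + 1 = N + m + s + 2 from by omega,
          show N + m + s + 3 = (N + m + s + 2) + 1 from by omega]
        exact g_step _ _
      have h4 : g (2 * N + 2) (N + m + s + 1)
          = (2 * N + 2).choose (N + m + s + 2) + g (2 * N + 2) (N + m + (s + 1) + 1) := by
        rw [show N + m + (s + 1) + 1 = (N + m + s + 1) + 1 from by omega,
          show N + m + s + 2 = (N + m + s + 1) + 1 from by omega]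
        exact g_step _ _
      have h5 : g (2 * N + 2) (N + m + (s + 2) + 1) = g (2 * N + 2) (N + m + s + 3) := by
        rw [show N + m + (s + 2) + 1 = N + m + s + 3 from by omega]
      have h6 : (2 * N + 2 + 1).choose (N + m + s + 3)
          = (2 * N + 2).choose (N + m + s + 2) + (2 * N + 2).choose (N + m + s + 3) := by
        rw [show N + m + s + 3 = (N + m + s + 2) + 1 from by omega]
        exact Nat.choose_succ_succ' _ _
      rw [h1, h2, h5]
      omega

/-- ballot as a difference, in additive form. -/
lemma ballot_add (a n₀ : ℕ) (h1 : 1 ≤ n₀) (h : n₀ ≤ a + 1) :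
    ballot (a + n₀) (a + 1 - n₀) + (2 * a + 1).choose (a + n₀ + 1)
      = (2 * a + 1).choose (a + n₀) := by
  unfold ballot
  rw [show a + n₀ + (a + 1 - n₀) = 2 * a + 1 from by omega]
  have hle : (2 * a + 1).choose (a + n₀ + 1) ≤ (2 * a + 1).choose (a + n₀) := by
    rcases le_or_gt n₀ a with h2 | h2
    · have e1 : (2 * a + 1).choose (a + n₀ + 1) = (2 * a + 1).choose (a - n₀) := by
        have h := Nat.choose_symm (show a + n₀ + 1 ≤ 2 * a + 1 by omega)
        rw [show 2 * a + 1 - (a + n₀ + 1) = a - n₀ from by omega] at h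
        exact h.symm
      have e2 : (2 * a + 1).choose (a + n₀) = (2 * a + 1).choose (a - n₀ + 1) := by
        have h := Nat.choose_symm (show a + n₀ ≤ 2 * a + 1 by omega)
        rw [show 2 * a + 1 - (a + n₀) = a - n₀ + 1 from by omega] at h
        exact h.symm
      rw [e1, e2]
      exact Nat.choose_le_succ_of_lt_half_left (by omega)
    · rw [Nat.choose_eq_zero_of_lt (by omega)]
      exact Nat.zero_le _
  omega

end BTasepAux

open BTasepAux in
/-- For `n ≥ n₀ ≥ 0`, the partition function of the `B`-TASEP with `n` sites
and `n₀` zeros equals `C(2n, n-n₀)`: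
`C^{n+n₀-1}_{n-n₀} + 2 ∑_{i=n₀}^{n-1} C^{i+n₀-1}_{i-n₀} C(2n-2i-1, n-i-1) = C(2n, n-n₀)`. -/
theorem B_partition_function (n n₀ : ℕ) (hn : 1 ≤ n) (h : n₀ ≤ n) :
    ballot (n + n₀ - 1) (n - n₀)
        + 2 * ∑ i ∈ Finset.Icc n₀ (n - 1),
            ballot (i + n₀ - 1) (i - n₀) * (2 * n - 2 * i - 1).choose (n - i - 1)
      = (2 * n).choose (n - n₀) := by
  obtain ⟨N, rfl⟩ : ∃ N, n = N + 1 := ⟨n - 1, by omega⟩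
  rcases Nat.eq_zero_or_pos n₀ with h0 | h0
  · -- case n₀ = 0
    subst h0
    have hb : ballot (N + 1 + 0 - 1) (N + 1 - 0) = 0 := by
      unfold ballot
      rw [show N + 1 + 0 - 1 = N from by omega,
        show N + (N + 1 - 0) = 2 * N + 1 from by omega]
      have hs := Nat.choose_symm (show N + 1 ≤ 2 * N + 1 by omega)
      rw [show 2 * N + 1 - (N + 1) = N from by omega] at hs
      omega
    have hsum : ∑ i ∈ Finset.Icc 0 (N + 1 - 1),
        ballot (i + 0 - 1) (i - 0) * (2 * (N + 1) - 2 * i - 1).choose (N + 1 - i - 1)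
        = ballot (0 + 0 - 1) (0 - 0) * (2 * (N + 1) - 2 * 0 - 1).choose (N + 1 - 0 - 1) := by
      refine Finset.sum_eq_single_of_mem 0 (Finset.mem_Icc.mpr ⟨le_rfl, Nat.zero_le _⟩) ?_
      intro i hi hne
      obtain ⟨j, rfl⟩ : ∃ j, i = j + 1 := ⟨i - 1, by omega⟩
      have hz : ballot (j + 1 + 0 - 1) (j + 1 - 0) = 0 := by
        unfold ballot
        rw [show j + 1 + 0 - 1 = j from by omega,
          show j + (j + 1 - 0) = 2 * j + 1 from by omega]
        have hs := Nat.choose_symm (show j + 1 ≤ 2 * j + 1 by omega)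
        rw [show 2 * j + 1 - (j + 1) = j from by omega] at hs
        omega
      rw [hz, zero_mul]
    rw [hb, hsum, show ballot (0 + 0 - 1) (0 - 0) = 1 from rfl,
      show 2 * (N + 1) - 2 * 0 - 1 = 2 * N + 1 from by omega,
      show N + 1 - 0 - 1 = N from by omega, one_mul,
      show 2 * (N + 1) = 2 * N + 1 + 1 from by omega,
      show N + 1 - 0 = N + 1 from by omega, dbl N]
    omega
  · -- case n₀ ≥ 1
    have hP' : ∑ a ∈ Finset.range (N + 1),
        (2 * a + 1).choose (a + n₀) * (2 * (N - a)).choose (N - a)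
        = g (2 * N + 2) (N + n₀) := by
      have hk := key (n₀ - 1) N 0
      rw [show N + (n₀ - 1) + 0 + 1 = N + n₀ from by omega] at hk
      rw [← hk]
      refine Finset.sum_congr rfl fun a ha => ?_
      rw [show a + 1 + (n₀ - 1) = a + n₀ from by omega]
      rfl
    have hQ' : ∑ a ∈ Finset.range (N + 1),
        (2 * a + 1).choose (a + n₀ + 1) * (2 * (N - a)).choose (N - a)
        = g (2 * N + 2) (N + n₀ + 1) := by
      have hk := key n₀ N 0
      rw [show N + n₀ + 0 + 1 = N + n₀ + 1 from by omega] at hk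
      rw [← hk]
      refine Finset.sum_congr rfl fun a ha => ?_
      rw [show a + 1 + n₀ = a + n₀ + 1 from by omega]
      rfl
    have hsub : Finset.Ico (n₀ - 1) (N + 1) ⊆ Finset.range (N + 1) := by
      intro x hx
      rw [Finset.mem_Ico] at hx
      rw [Finset.mem_range]
      omega
    have hPr : ∑ a ∈ Finset.Ico (n₀ - 1) (N + 1),
        (2 * a + 1).choose (a + n₀) * (2 * (N - a)).choose (N - a)
        = g (2 * N + 2) (N + n₀) := by
      rw [← hP']
      refine Finset.sum_subset hsub fun x hx hnx => ?_
      rw [Finset.mem_range] at hx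
      rw [Finset.mem_Ico] at hnx
      rw [Nat.choose_eq_zero_of_lt (by omega), zero_mul]
    have hQr : ∑ a ∈ Finset.Ico (n₀ - 1) (N + 1),
        (2 * a + 1).choose (a + n₀ + 1) * (2 * (N - a)).choose (N - a)
        = g (2 * N + 2) (N + n₀ + 1) := by
      rw [← hQ']
      refine Finset.sum_subset hsub fun x hx hnx => ?_
      rw [Finset.mem_range] at hx
      rw [Finset.mem_Ico] at hnx
      rw [Nat.choose_eq_zero_of_lt (by omega), zero_mul]
    have claim : ballot (N + 1 + n₀ - 1) (N + 1 - n₀)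
        + 2 * ∑ i ∈ Finset.Icc n₀ (N + 1 - 1),
            ballot (i + n₀ - 1) (i - n₀) * (2 * (N + 1) - 2 * i - 1).choose (N + 1 - i - 1)
        + ∑ a ∈ Finset.Ico (n₀ - 1) (N + 1),
            (2 * a + 1).choose (a + n₀ + 1) * (2 * (N - a)).choose (N - a)
        = ∑ a ∈ Finset.Ico (n₀ - 1) (N + 1),
            (2 * a + 1).choose (a + n₀) * (2 * (N - a)).choose (N - a) := by
      rw [show N + 1 - 1 = N from rfl, ← Finset.Ico_add_one_right_eq_Icc]
      have hmap : Finset.Ico n₀ (N + 1)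
          = (Finset.Ico (n₀ - 1) N).map (addRightEmbedding 1) := by
        rw [Finset.map_add_right_Ico]
        congr 1
        omega
      rw [hmap, Finset.sum_map]
      simp only [addRightEmbedding_apply]
      rw [Finset.sum_Ico_succ_top (show n₀ - 1 ≤ N from by omega),
        Finset.sum_Ico_succ_top (show n₀ - 1 ≤ N from by omega),
        Finset.mul_sum]
      have hsum2 : (∑ a ∈ Finset.Ico (n₀ - 1) N,
            2 * (ballot (a + 1 + n₀ - 1) (a + 1 - n₀)
              * (2 * (N + 1) - 2 * (a + 1) - 1).choose (N + 1 - (a + 1) - 1)))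
          + ∑ a ∈ Finset.Ico (n₀ - 1) N,
              (2 * a + 1).choose (a + n₀ + 1) * (2 * (N - a)).choose (N - a)
          = ∑ a ∈ Finset.Ico (n₀ - 1) N,
              (2 * a + 1).choose (a + n₀) * (2 * (N - a)).choose (N - a) := by
        rw [← Finset.sum_add_distrib]
        refine Finset.sum_congr rfl fun a ha => ?_
        rw [Finset.mem_Ico] at ha
        rw [show a + 1 + n₀ - 1 = a + n₀ from by omega,
          show 2 * (N + 1) - 2 * (a + 1) - 1 = 2 * (N - a) - 1 from by omega,
          show N + 1 - (a + 1) - 1 = N - a - 1 from by omega]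
        obtain ⟨b, hb⟩ : ∃ b, N - a = b + 1 := ⟨N - a - 1, by omega⟩
        rw [hb]
        rw [show 2 * (b + 1) - 1 = 2 * b + 1 from by omega,
          show b + 1 - 1 = b from by omega,
          show 2 * (b + 1) = 2 * b + 1 + 1 from by omega, dbl b,
          ← ballot_add a n₀ h0 (by omega)]
        ring
      have htop : ballot (N + 1 + n₀ - 1) (N + 1 - n₀)
            + (2 * N + 1).choose (N + n₀ + 1) * (2 * (N - N)).choose (N - N)
          = (2 * N + 1).choose (N + n₀) * (2 * (N - N)).choose (N - N) := by
        rw [Nat.sub_self, show (2 * 0 : ℕ) = 0 from rfl, Nat.choose_self, mul_one, mul_one,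
          show N + 1 + n₀ - 1 = N + n₀ from by omega]
        exact ballot_add N n₀ h0 (by omega)
      omega
    rw [hPr, hQr] at claim
    have hgs := g_step (2 * N + 2) (N + n₀)
    have hR : (2 * (N + 1)).choose (N + 1 - n₀) = (2 * N + 2).choose (N + n₀ + 1) := by
      have hs := Nat.choose_symm (show N + n₀ + 1 ≤ 2 * N + 2 by omega)
      rw [show 2 * N + 2 - (N + n₀ + 1) = N + 1 - n₀ from by omega] at hs
      rw [show 2 * (N + 1) = 2 * N + 2 from by omega]
      exact hs
    rw [hR]
    omega
end

section
/- The sequence $Z_{n,n_0} = \sum_{j=0}^{n-n_0}\binom{2j}{j}\binom{2n-2j-2}{n-j-n_0}$ satisfies the recursion $Z_{n,n_0} = 4 Z_{n-1,n_0} + C^{n+n_0-3}_{n-n_0}$ for $n > n_0 \ge 2$, where $C^m_k$ are ballot numbers. -/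
/-- The partition function of the `D`-TASEP with `n` sites and `n₀` zeros. -/
def Z (n n₀ : ℕ) : ℕ :=
  ∑ j ∈ Finset.range (n - n₀ + 1), (2 * j).choose j * (2 * n - 2 * j - 2).choose (n - j - n₀)

open PowerSeries

lemma cast_ballot_succ {R : Type*} [AddGroupWithOne R] {n k : ℕ} (hk : k ≤ n) :
    (ballot n (k + 1) : R) = (n + k + 1).choose (k + 1) - (n + k + 1).choose k := by
  have hsymm₁ : (n + (k + 1)).choose n = (n + k + 1).choose (k + 1) := by
    rw [Nat.choose_symm_add, ← add_assoc]
  have hsymm₂ : (n + (k + 1)).choose (n + 1) = (n + k + 1).choose k := by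
    rw [show n + (k + 1) = n + 1 + k by ring, Nat.choose_symm_add, add_right_comm]
  have hmono : (n + k + 1).choose k ≤ (n + k + 1).choose (k + 1) := by
    refine Nat.le_of_mul_le_mul_right ?_ k.succ_pos
    rw [Nat.choose_succ_right_eq]
    exact Nat.mul_le_mul_left _ (by omega)
  rw [ballot, hsymm₁, hsymm₂, Nat.cast_sub hmono]

section Series

variable (R : Type*) [CommRing R]

noncomputable def shiftedCentralBinomSeries (r : ℕ) : R⟦X⟧ :=
  mk fun j => ((2 * j + r).choose j : R)

local notation "F" => shiftedCentralBinomSeries R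

local notation "𝒞" => catalanSeries.map (Nat.castRingHom R)

variable {R}

lemma coeff_shiftedCentralBinomSeries (r j : ℕ) :
    coeff j (F r) = ((2 * j + r).choose j : R) :=
  coeff_mk _ _

lemma shiftedCentralBinomSeries_succ (r : ℕ) : F (r + 1) = F r + X * F (r + 2) := by
  ext (_ | j)
  · rw [map_add, coeff_zero_X_mul]
    simp [coeff_shiftedCentralBinomSeries]
  · rw [map_add, coeff_succ_X_mul]
    simp only [coeff_shiftedCentralBinomSeries]
    rw [show 2 * (j + 1) + (r + 1) = (2 * j + (r + 2)) + 1 by ring, Nat.choose_succ_succ',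
      show 2 * (j + 1) + r = 2 * j + (r + 2) by ring]
    push_cast
    ring

lemma shiftedCentralBinomSeries_zero : F 0 = 1 + 2 * X * F 1 := by
  ext (_ | j)
  · simp [coeff_shiftedCentralBinomSeries]
  · rw [map_add, mul_comm 2, mul_assoc, coeff_succ_X_mul, coeff_one, if_neg j.succ_ne_zero,
      zero_add, ← map_ofNat C 2, coeff_C_mul]
    simp only [coeff_shiftedCentralBinomSeries]
    rw [show 2 * (j + 1) + 0 = 2 * j + 1 + 1 by ring, Nat.choose_succ_succ',
      Nat.choose_symm_half]
    push_cast
    ring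

lemma catalanSeries_map_eq : 𝒞 = 1 + X * 𝒞 ^ 2 := by
  conv_lhs => rw [← catalanSeries_sq_mul_X_add_one]
  simp only [map_add, map_mul, map_pow, map_X, map_one]
  ring

/-- The error terms `Eᵣ = C Fᵣ - F_{r+1}` satisfy `Eᵣ = x (C Eᵣ + E_{r+1})`, so every `Eᵣ` is
divisible by every power of `x`. -/
lemma catalanSeries_map_mul_shiftedCentralBinomSeries (r : ℕ) : 𝒞 * F r = F (r + 1) := by
  set E : ℕ → R⟦X⟧ := fun r => 𝒞 * F r - F (r + 1) with hE_def
  have hE (r : ℕ) : E r = X * (𝒞 * E r + E (r + 1)) := by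
    simp only [hE_def]
    linear_combination
      F r * catalanSeries_map_eq (R := R) - shiftedCentralBinomSeries_succ (R := R) r
  have hdvd (k : ℕ) : ∀ r, X ^ k ∣ E r := by
    induction k with
    | zero => simp
    | succ k ih =>
      intro r
      rw [hE, pow_succ']
      exact mul_dvd_mul_left X (dvd_add (dvd_mul_of_dvd_right (ih r) _) (ih (r + 1)))
  ext k
  have hk := X_pow_dvd_iff.mp (hdvd (k + 1) r) k k.lt_succ_self
  rwa [hE_def, map_sub, sub_eq_zero] at hk

lemma one_sub_four_X_mul_shiftedCentralBinomSeries (r : ℕ) :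
    (1 - 4 * X) * F 0 * F r = F r - 2 * X * F (r + 1) := by
  have hB : F 0 = 1 + 2 * X * 𝒞 * F 0 := by
    rw [mul_assoc _ 𝒞, catalanSeries_map_mul_shiftedCentralBinomSeries]
    exact shiftedCentralBinomSeries_zero
  linear_combination 4 * X * F 0 * F r * catalanSeries_map_eq (R := R)
    + (1 - 2 * X * 𝒞) * F r * hB
    - 2 * X * catalanSeries_map_mul_shiftedCentralBinomSeries (R := R) r

lemma coeff_succ_shiftedCentralBinomSeries_mul (r m : ℕ) :
    coeff (m + 1) (F 0 * F r) =
      4 * coeff m (F 0 * F r) + (2 * m + r + 1).choose (m + 1) - (2 * m + r + 1).choose m := by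
  have h : F 0 * F r - X * (4 * (F 0 * F r)) = F r - X * (2 * F (r + 1)) := by
    linear_combination one_sub_four_X_mul_shiftedCentralBinomSeries (R := R) r
  replace h := congrArg (coeff (m + 1)) h
  simp only [map_sub, coeff_succ_X_mul, ← map_ofNat C, coeff_C_mul,
    coeff_shiftedCentralBinomSeries] at h
  rw [show 2 * (m + 1) + r = 2 * m + r + 1 + 1 by ring, Nat.choose_succ_succ',
    show 2 * m + (r + 1) = 2 * m + r + 1 by ring] at h
  push_cast at h
  linear_combination h

lemma cast_Z_eq_coeff (a m : ℕ) :
    (Z (a + 1 + m) (a + 1) : R) = coeff m (F 0 * F (2 * a)) := by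
  rw [coeff_mul, Finset.Nat.sum_antidiagonal_eq_sum_range_succ_mk, Z,
    show a + 1 + m - (a + 1) + 1 = m + 1 by omega]
  push_cast
  refine Finset.sum_congr rfl fun j hjm => ?_
  have hj : j ≤ m := Finset.mem_range_succ_iff.mp hjm
  simp only [coeff_shiftedCentralBinomSeries]
  rw [show 2 * (a + 1 + m) - 2 * j - 2 = 2 * (m - j) + 2 * a by omega,
    show a + 1 + m - j - (a + 1) = m - j by omega, add_zero]

end Series

/-- The recursion `Z_{n,n₀} = 4 Z_{n-1,n₀} + C^{n+n₀-3}_{n-n₀}` for `n > n₀ ≥ 2`. -/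
theorem Z_recursion (n n₀ : ℕ) (h2 : 2 ≤ n₀) (h : n₀ < n) :
    Z n n₀ = 4 * Z (n - 1) n₀ + ballot (n + n₀ - 3) (n - n₀) := by
  obtain ⟨a, rfl⟩ : ∃ a, n₀ = a + 1 := ⟨n₀ - 1, by omega⟩
  obtain ⟨m, rfl⟩ : ∃ m, n = a + 1 + (m + 1) := ⟨n - a - 2, by omega⟩
  rw [show a + 1 + (m + 1) - 1 = a + 1 + m by omega,
    show a + 1 + (m + 1) + (a + 1) - 3 = 2 * a + m by omega,
    show a + 1 + (m + 1) - (a + 1) = m + 1 by omega]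
  zify
  rw [cast_Z_eq_coeff, cast_Z_eq_coeff, cast_ballot_succ (by omega),
    coeff_succ_shiftedCentralBinomSeries_mul, show 2 * a + m + m + 1 = 2 * m + 2 * a + 1 by ring]
  ring
end

section
/- In the $B$-TASEP with $n$ sites and $n_0$ zeros, the stationary probability that the last site is occupied by a $1$ equals $\frac{n-n_0}{2n}$. Equivalently, $\frac{\binom{2n-2}{n-n_0-2} + C^{n+n_0-2}_{n-n_0-1} + 2\binom{2n-3}{n-n_0-2}}{\binom{2n}{n-n_0}} = \frac{n-n_0}{2n}$. -/
/-- Binomial coefficient `C(m, k)` with an integer lower index, which is `0`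
when `k < 0`. -/
def binZ (m : ℕ) (k : ℤ) : ℕ := if 0 ≤ k then m.choose k.toNat else 0

/-- Ballot number `C^m_k` with an integer index `k`, which is `0` when `k < 0`. -/
def ballotZ (m : ℕ) (k : ℤ) : ℕ :=
  if 0 ≤ k then (m + k.toNat).choose m - (m + k.toNat).choose (m + 1) else 0

/-- In the `B`-TASEP with `n` sites and `n₀` zeros, the stationary probability
that the last site holds a `1` equals `(n - n₀)/(2n)`:
`(C(2n-2, n-n₀-2) + C^{n+n₀-2}_{n-n₀-1} + 2 C(2n-3, n-n₀-2)) / C(2n, n-n₀) = (n-n₀)/(2n)`. -/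
theorem B_last_site_density (n n₀ : ℕ) (hn : 2 ≤ n) (h : n₀ ≤ n) :
    ((binZ (2 * n - 2) ((n : ℤ) - n₀ - 2) : ℚ)
        + (ballotZ (n + n₀ - 2) ((n : ℤ) - n₀ - 1) : ℚ)
        + 2 * (binZ (2 * n - 3) ((n : ℤ) - n₀ - 2) : ℚ))
      / ((2 * n).choose (n - n₀) : ℚ)
      = ((n : ℚ) - n₀) / (2 * n) := by
  obtain ⟨m, rfl⟩ : ∃ m, n = n₀ + m := ⟨n - n₀, (Nat.add_sub_cancel' h).symm⟩
  match m with
  | 0 =>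
    have e1 : ((n₀ + 0 : ℕ) : ℤ) - n₀ - 2 = -2 := by push_cast; ring
    have e2 : ((n₀ + 0 : ℕ) : ℤ) - n₀ - 1 = -1 := by push_cast; ring
    rw [e1, e2]
    simp [binZ, ballotZ]
  | 1 =>
    obtain ⟨p, rfl⟩ : ∃ p, n₀ = p + 1 := ⟨n₀ - 1, by omega⟩
    have e1 : ((p + 1 + 1 : ℕ) : ℤ) - (p + 1 : ℕ) - 2 = -1 := by push_cast; ring
    have e2 : ((p + 1 + 1 : ℕ) : ℤ) - (p + 1 : ℕ) - 1 = 0 := by push_cast; ring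
    rw [e1, e2]
    have eM : p + 1 + 1 + (p + 1) - 2 = 2 * p + 1 := by omega
    have eD : p + 1 + 1 - (p + 1) = 1 := by omega
    rw [eM, eD]
    have hb : ballotZ (2 * p + 1) 0 = 1 := by
      simp [ballotZ, Nat.choose_self, Nat.choose_succ_self]
    rw [hb]
    simp only [binZ]
    rw [if_neg (by norm_num), Nat.choose_one_right]
    push_cast
    rw [div_eq_div_iff (by positivity) (by positivity)]
    ring
  | (j + 2) =>
    set N := 2 * n₀ + 2 * j + 1 with hN
    have e1 : ((n₀ + (j + 2) : ℕ) : ℤ) - n₀ - 2 = (j : ℤ) := by push_cast; ring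
    have e2 : ((n₀ + (j + 2) : ℕ) : ℤ) - n₀ - 1 = ((j + 1 : ℕ) : ℤ) := by push_cast; ring
    rw [e1, e2]
    have eA : 2 * (n₀ + (j + 2)) - 2 = N + 1 := by omega
    have eB : 2 * (n₀ + (j + 2)) - 3 = N := by omega
    have eM : n₀ + (j + 2) + n₀ - 2 = 2 * n₀ + j := by omega
    have eD : n₀ + (j + 2) - n₀ = j + 2 := by omega
    rw [eA, eB, eM, eD]
    have hb1 : binZ (N + 1) (j : ℤ) = (N + 1).choose j := by simp [binZ]
    have hb2 : binZ N (j : ℤ) = N.choose j := by simp [binZ]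
    have hsum : 2 * n₀ + j + (j + 1) = N := by omega
    have hs1 : (2 * n₀ + j + (j + 1)).choose (2 * n₀ + j) = N.choose (j + 1) := by
      rw [hsum, ← Nat.choose_symm (show 2 * n₀ + j ≤ N by omega)]
      congr 1
      omega
    have hs2 : (2 * n₀ + j + (j + 1)).choose (2 * n₀ + j + 1) = N.choose j := by
      rw [hsum, ← Nat.choose_symm (show 2 * n₀ + j + 1 ≤ N by omega)]
      congr 1
      omega
    have hle : N.choose j ≤ N.choose (j + 1) := by
      rcases Nat.eq_zero_or_pos n₀ with h0 | h0
      · subst h0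
        have : N = 2 * j + 1 := by omega
        rw [this]
        exact le_of_eq (Nat.choose_symm_half j).symm
      · exact Nat.choose_le_succ_of_lt_half_left (by omega)
    have hb3 : ballotZ (2 * n₀ + j) ((j + 1 : ℕ) : ℤ) = N.choose (j + 1) - N.choose j := by
      have hpos : (0 : ℤ) ≤ ((j + 1 : ℕ) : ℤ) := Int.natCast_nonneg _
      simp only [ballotZ, if_pos hpos, Int.toNat_natCast, hs1, hs2]
    rw [hb1, hb2, hb3]
    have key : (2 * n₀ + 2 * j + 4) * ((N + 1).choose j + (N.choose j + N.choose (j + 1)))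
        = (2 * n₀ + 2 * j + 4).choose (j + 2) * (j + 2) := by
      have h1 := Nat.add_one_mul_choose_eq (N + 2) (j + 1)
      have h2 : (N + 2).choose (j + 1) = (N + 1).choose j + (N + 1).choose (j + 1) :=
        Nat.choose_succ_succ (N + 1) j
      have h3 : (N + 1).choose (j + 1) = N.choose j + N.choose (j + 1) :=
        Nat.choose_succ_succ N j
      have hNe : N + 3 = 2 * n₀ + 2 * j + 4 := by omega
      rw [h2, h3] at h1
      rw [← hNe]
      calc (N + 3) * ((N + 1).choose j + (N.choose j + N.choose (j + 1)))
          = Nat.succ (N + 2) * ((N + 1).choose j + (N.choose j + N.choose (j + 1))) := rfl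
        _ = (N + 3).choose (j + 2) * (j + 2) := h1
        _ = (2 * n₀ + 2 * j + 4).choose (j + 2) * (j + 2) := by rw [hNe]
    have keyQ := congrArg (Nat.cast : ℕ → ℚ) key
    push_cast at keyQ
    have hden : ((2 * (n₀ + (j + 2))).choose (j + 2) : ℚ) ≠ 0 := by
      have : 0 < (2 * (n₀ + (j + 2))).choose (j + 2) := Nat.choose_pos (by omega)
      positivity
    have hden2 : (2 * ((n₀ : ℚ) + (j + 2)) : ℚ) ≠ 0 := by positivity
    have hch : (2 * (n₀ + (j + 2))) = 2 * n₀ + 2 * j + 4 := by omega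
    rw [Nat.cast_sub hle]
    push_cast
    rw [div_eq_div_iff hden (by positivity)]
    rw [hch]
    ring_nf
    ring_nf at keyQ
    linarith [keyQ]
end

section
/- For $1 \le i \le n$ and $n \ge 2$, we have $\frac{2\binom{2n-3}{n-i-1}}{\binom{2n}{n-i+1}} - \frac{2\binom{2n-3}{n-i-2}}{\binom{2n}{n-i}} = \frac{(n-i)(n+3i-1)}{2n(2n-1)(n-1)}$, which gives the down-hook sum $H^{\downarrow}_i(n)$ of two-point correlations in the $B$-MultiTASEP. -/
/-! With `m = n - n₀`, the correlation `⟨1,1̄⟩_{n,n₀} = 2C(2n-3, m-2)/C(2n, m)` collapses to the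
cubic `m(m-1)(2n-m)/(2n(2n-1)(n-1))`, which also covers `m ∈ {0, 1}`, where the numerator
vanishes. The down-hook sum is the difference of this cubic at `m = n-i+1` and `m = n-i`. -/

@[simp]
lemma binZ_natCast (m k : ℕ) : binZ m k = m.choose k := by
  simp [binZ]

lemma binZ_of_neg {m : ℕ} {k : ℤ} (hk : k < 0) : binZ m k = 0 := by
  simp [binZ, not_le.mpr hk]

lemma Nat.choose_add_three_add_two_mul (N k : ℕ) :
    (N + 3).choose (k + 2) * ((k + 2) * (k + 1) * (N + 1 - k))
      = N.choose k * ((N + 3) * (N + 2) * (N + 1)) := by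
  have h₁ : (N + 1) * N.choose k = (N + 1).choose (k + 1) * (k + 1) :=
    Nat.add_one_mul_choose_eq N k
  have h₂ : (N + 2) * (N + 1).choose (k + 1) = (N + 2).choose (k + 2) * (k + 2) :=
    Nat.add_one_mul_choose_eq (N + 1) (k + 1)
  have h₃ : (N + 2).choose (k + 2) * (N + 3) = (N + 3).choose (k + 2) * (N + 1 - k) := by
    rw [Nat.choose_mul_succ_eq, show N + 2 + 1 - (k + 2) = N + 1 - k by omega]
  calc (N + 3).choose (k + 2) * ((k + 2) * (k + 1) * (N + 1 - k))
      = (N + 3).choose (k + 2) * (N + 1 - k) * ((k + 2) * (k + 1)) := by ring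
    _ = (N + 2).choose (k + 2) * (k + 2) * ((N + 3) * (k + 1)) := by rw [← h₃]; ring
    _ = (N + 1).choose (k + 1) * (k + 1) * ((N + 3) * (N + 2)) := by rw [← h₂]; ring
    _ = N.choose k * ((N + 3) * (N + 2) * (N + 1)) := by rw [← h₁]; ring

lemma two_mul_binZ_div_choose (n m : ℕ) (hn : 2 ≤ n) (hm : m ≤ 2 * n) :
    2 * (binZ (2 * n - 3) ((m : ℤ) - 2) : ℚ) / ((2 * n).choose m : ℚ)
      = (m : ℚ) * (m - 1) * (2 * n - m) / (2 * n * (2 * n - 1) * (n - 1)) := by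
  rcases Nat.lt_or_ge m 2 with hm2 | hm2
  · rw [binZ_of_neg (by omega)]
    interval_cases m <;> simp
  obtain ⟨k, rfl⟩ := Nat.exists_eq_add_of_le' hm2
  set N := 2 * n - 3 with hN
  have h2n : 2 * n = N + 3 := by omega
  have hNq : (N : ℚ) = 2 * n - 3 := by rw [hN]; push_cast [show 3 ≤ 2 * n by omega]; ring
  have hchoose : ((N + 3).choose (k + 2) : ℚ) ≠ 0 := mod_cast (Nat.choose_pos (h2n ▸ hm)).ne'
  have hden : (2 * n * (2 * n - 1) * (n - 1) : ℚ) ≠ 0 := by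
    have : (2 : ℚ) ≤ n := by exact_mod_cast hn
    apply_rules [mul_ne_zero] <;> linarith
  have key := Nat.choose_add_three_add_two_mul N k
  qify [show k ≤ N + 1 by omega] at key
  rw [show ((k + 2 : ℕ) : ℤ) - 2 = (k : ℕ) by push_cast; ring, binZ_natCast, h2n,
    div_eq_div_iff hchoose hden]
  push_cast at key ⊢
  rw [hNq] at key
  linear_combination -key

theorem B_down_hook_general (n i : ℕ) (hn : 2 ≤ n) (hin : i ≤ n) :
    2 * (binZ (2 * n - 3) ((n : ℤ) - i - 1) : ℚ) / ((2 * n).choose (n - i + 1) : ℚ)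
        - 2 * (binZ (2 * n - 3) ((n : ℤ) - i - 2) : ℚ) / ((2 * n).choose (n - i) : ℚ)
      = ((n : ℚ) - i) * ((n : ℚ) + 3 * i - 1) / (2 * n * (2 * n - 1) * (n - 1)) := by
  rw [show (n : ℤ) - i - 1 = ((n - i + 1 : ℕ) : ℤ) - 2 by push_cast [hin]; ring,
    show (n : ℤ) - i - 2 = ((n - i : ℕ) : ℤ) - 2 by push_cast [hin]; ring,
    two_mul_binZ_div_choose n _ hn (by omega), two_mul_binZ_div_choose n _ hn (by omega),
    ← sub_div]
  push_cast [hin]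
  ring

/-- The down-hook sum of two-point correlations in the `B`-MultiTASEP:
`H↓_i(n) = ⟨1,1̄⟩_{n,i-1} - ⟨1,1̄⟩_{n,i}
        = 2C(2n-3, n-i-1)/C(2n, n-i+1) - 2C(2n-3, n-i-2)/C(2n, n-i)
        = (n-i)(n+3i-1)/(2n(2n-1)(n-1))` for `1 ≤ i ≤ n`, `n ≥ 2`. -/
theorem B_down_hook (n i : ℕ) (hn : 2 ≤ n) (hi : 1 ≤ i) (hin : i ≤ n) :
    2 * (binZ (2 * n - 3) ((n : ℤ) - i - 1) : ℚ) / ((2 * n).choose (n - i + 1) : ℚ)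
        - 2 * (binZ (2 * n - 3) ((n : ℤ) - i - 2) : ℚ) / ((2 * n).choose (n - i) : ℚ)
      = ((n : ℚ) - i) * ((n : ℚ) + 3 * i - 1) / (2 * n * (2 * n - 1) * (n - 1)) :=
  B_down_hook_general n i hn hin
end
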